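/- (Supercritical direction of the main theorem.) Let, for each n ≥ 2, scores z_{n,1},…,z_{n,n} be given with Λ_n < ∞ for all sufficiently large n, and let (β_n) be a positive deterministic sequence with β_n/Λ_n → ∞ as n → ∞. Then Z_n(β_n) → 1 and the Shannon entropy satisfies H_n(β_n) → 0. -/

import Mathlib

open Filter MeasureTheory
open scoped ENNReal

/-- Maximum score `z_n^*`. -/
noncomputable def zmax (n : ℕ) (z : Fin n → ℝ) : ℝ := sSup (Set.range z)

/-- Gap `g_{n,j} = z_n^* - z_{n,j}`. -/
noncomputable def gap (n : ℕ) (z : Fin n → ℝ) (j : Fin n) : ℝ := zmax n z - z j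

/-- Cumulative gap-counting function `N_n(t)`. -/
noncomputable def Ncount (n : ℕ) (z : Fin n → ℝ) (t : ℝ) : ℕ :=
  {j : Fin n | gap n z j ≤ t}.ncard

/-- Normalised partition function `Z_n(β)`. -/
noncomputable def Zfun (n : ℕ) (z : Fin n → ℝ) (β : ℝ) : ℝ :=
  ∑ j : Fin n, Real.exp (-(β * gap n z j))

/-- Softmax probabilities `p_{n,j}(β)`. -/
noncomputable def softmaxP (n : ℕ) (z : Fin n → ℝ) (β : ℝ) (j : Fin n) : ℝ :=
  Real.exp (β * z j) / ∑ ℓ : Fin n, Real.exp (β * z ℓ)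

/-- Shannon entropy `H_n(β)`. -/
noncomputable def entropyH (n : ℕ) (z : Fin n → ℝ) (β : ℝ) : ℝ :=
  -∑ j : Fin n, softmaxP n z β j * Real.log (softmaxP n z β j)

/-- The set of values `log N_n(t) / t` over `t > 0`, whose supremum is `Λ_n`. -/
def lamSet (n : ℕ) (z : Fin n → ℝ) : Set ℝ :=
  {r | ∃ t : ℝ, 0 < t ∧ r = Real.log (Ncount n z t) / t}

/-- Second-largest entry of a finite vector (equals the largest in case of ties). -/
noncomputable def secondLargest (n : ℕ) (v : Fin n → ℝ) : ℝ :=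
  sInf (Set.range fun i => sSup (v '' {j | j ≠ i}))

/-- Top-two weight gap `D_n(β)`. -/
noncomputable def Dgap (n : ℕ) (z : Fin n → ℝ) (β : ℝ) : ℝ :=
  sSup (Set.range (softmaxP n z β)) - secondLargest n (softmaxP n z β)

/-- Rank gap `G_n(β) = max_{i,j} |p_{n,i}(β) - p_{n,j}(β)|`. -/
noncomputable def Ggap (n : ℕ) (z : Fin n → ℝ) (β : ℝ) : ℝ :=
  sSup {x | ∃ i j : Fin n, x = |softmaxP n z β i - softmaxP n z β j|}

/-- Resolved accumulation scale `Λ_n^{(r)}` (with `sup ∅ = 0`), valued in `ℝ≥0∞`. -/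
noncomputable def resolvedLam (n : ℕ) (z : Fin n → ℝ) (r : ℝ) : ℝ≥0∞ :=
  ⨆ t ∈ {t : ℝ | 0 < t ∧ r < Real.log (Ncount n z t)},
    ENNReal.ofReal ((Real.log (Ncount n z t) - r) / t)

/-- Laplace envelope `S_n(β) = sup_{t ≥ 0} (log N_n(t) - β t)`. -/
noncomputable def Sfun (n : ℕ) (z : Fin n → ℝ) (β : ℝ) : ℝ :=
  sSup {x | ∃ t : ℝ, 0 ≤ t ∧ x = Real.log (Ncount n z t) - β * t}

/-- Rank boundary `B_n^rank(r) = sup {β ≥ 0 : log Z_n(β) ≥ r}`, valued in `ℝ≥0∞`. -/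
noncomputable def rankBoundary (n : ℕ) (z : Fin n → ℝ) (r : ℝ) : ℝ≥0∞ :=
  ⨆ β ∈ {β : ℝ | 0 ≤ β ∧ r ≤ Real.log (Zfun n z β)}, ENNReal.ofReal β

/-- `X_n ≍ (log n)^ξ`. -/
def IsLogAsymp (X : ℕ → ℝ) (ξ : ℝ) : Prop :=
  ∃ c₁ c₂ : ℝ, 0 < c₁ ∧ c₁ ≤ c₂ ∧
    ∀ᶠ n : ℕ in Filter.atTop,
      c₁ * Real.log n ^ ξ ≤ X n ∧ X n ≤ c₂ * Real.log n ^ ξ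

/-! Writing `exp (-β g) = ∫_g^∞ β e^{-βt} dt` and summing over `j` gives the Laplace–Stieltjes
form `Z(β) = ∫_0^∞ β e^{-βt} N(t) dt`. Since `N(t) ≤ e^{Λ t}` for `t > 0`, this yields
`1 ≤ Z(β) ≤ β / (β - Λ)`, which tends to `1` as `β / Λ → ∞`.
For the entropy, `H(β) = β ∑ p_j g_j + log Z(β)`, and the elementary inequality
`x e^{-x} ≤ 2 (e^{-x/2} - e^{-x})` bounds `β ∑ p_j g_j` by `2 (Z(β/2) - Z(β)) / Z(β)`;
as `β/2` is supercritical too, this tends to `0`. -/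

open Set Real
open scoped Finset Topology

section Laplace

variable {ι : Type*} [Fintype ι] {g : ι → ℝ} {β : ℝ}

theorem sum_exp_neg_eq_integral (hg : ∀ i, 0 ≤ g i) (hβ : 0 < β) :
    ∑ i, exp (-(β * g i)) = ∫ t in Ioi 0, β * exp (-(β * t)) * #{i | g i ≤ t} := by
  have hw : IntegrableOn (fun t => β * exp (-(β * t))) (Ici 0) := by
    rw [integrableOn_Ici_iff_integrableOn_Ioi]
    simpa only [IntegrableOn, neg_mul] using (exp_neg_integrableOn_Ioi 0 hβ).const_mul β
  have hcount : ∀ t, β * exp (-(β * t)) * #{i | g i ≤ t} =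
      ∑ i, (Ici (g i)).indicator (fun t => β * exp (-(β * t))) t := by
    intro t
    simp only [Finset.natCast_card_filter, Finset.mul_sum, indicator_apply, mem_Ici, mul_ite,
      mul_one, mul_zero]
  have hexp : ∀ i, ∫ t in Ici 0, (Ici (g i)).indicator (fun t => β * exp (-(β * t))) t =
      exp (-(β * g i)) := by
    intro i
    rw [setIntegral_indicator measurableSet_Ici, Ici_inter_Ici, max_eq_right (hg i),
      integral_Ici_eq_integral_Ioi, integral_const_mul]
    simp_rw [← neg_mul]
    rw [integral_exp_mul_Ioi (neg_neg_of_pos hβ)]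
    field_simp
  rw [← integral_Ici_eq_integral_Ioi]
  simp_rw [hcount]
  rw [integral_finsetSum _ fun i _ => hw.indicator measurableSet_Ici]
  simp only [hexp]

theorem sum_exp_neg_le_of_card_le_exp (hg : ∀ i, 0 ≤ g i) {Λ : ℝ}
    (hcard : ∀ t > 0, (#{i | g i ≤ t} : ℝ) ≤ exp (Λ * t)) (hβ : 0 < β) (hΛβ : Λ < β) :
    ∑ i, exp (-(β * g i)) ≤ β / (β - Λ) := by
  have hrate : Λ - β < 0 := sub_neg.2 hΛβ
  calc ∑ i, exp (-(β * g i))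
      = ∫ t in Ioi 0, β * exp (-(β * t)) * #{i | g i ≤ t} := sum_exp_neg_eq_integral hg hβ
    _ ≤ ∫ t in Ioi 0, β * exp ((Λ - β) * t) := by
        refine integral_mono_of_nonneg (ae_of_all _ fun t => by positivity)
          ((integrableOn_exp_mul_Ioi hrate 0).const_mul β)
          (ae_restrict_of_forall_mem measurableSet_Ioi fun t ht => ?_)
        calc β * exp (-(β * t)) * #{i | g i ≤ t} ≤ β * exp (-(β * t)) * exp (Λ * t) :=
              mul_le_mul_of_nonneg_left (hcard t ht) (by positivity)
          _ = β * exp ((Λ - β) * t) := by rw [mul_assoc, ← exp_add]; ring_nf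
    _ = β / (β - Λ) := by
        rw [integral_const_mul, integral_exp_mul_Ioi hrate, mul_zero, exp_zero, neg_div, ← div_neg,
          neg_sub, mul_one_div]

end Laplace

theorem mul_exp_neg_le (x : ℝ) : x * exp (-x) ≤ 2 * (exp (-(x / 2)) - exp (-x)) := by
  have h := add_one_le_exp (x / 2)
  have hsplit : exp (-(x / 2)) = exp (x / 2) * exp (-x) := by rw [← exp_add]; ring_nf
  nlinarith [exp_pos (-x)]

section Softmax

variable {n : ℕ} (z : Fin n → ℝ)

theorem gap_nonneg (j : Fin n) : 0 ≤ gap n z j :=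
  sub_nonneg.2 (le_csSup (Set.finite_range z).bddAbove ⟨j, rfl⟩)

theorem exists_gap_eq_zero (hn : 0 < n) : ∃ j, gap n z j = 0 := by
  obtain ⟨j, hj⟩ := (Set.range_nonempty_iff_nonempty.2 ⟨⟨0, hn⟩⟩).csSup_mem (Set.finite_range z)
  exact ⟨j, by rw [gap, zmax, ← hj, sub_self]⟩

theorem Ncount_eq_card (t : ℝ) : Ncount n z t = #{j | gap n z j ≤ t} := by
  rw [Ncount, ← Set.ncard_coe_finset, Finset.coe_filter]
  simp only [Finset.mem_univ, true_and]

theorem Ncount_le_exp {Λ t : ℝ} (hlub : IsLUB (lamSet n z) Λ) (ht : 0 < t) :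
    (Ncount n z t : ℝ) ≤ exp (Λ * t) := by
  rcases (Nat.cast_nonneg (Ncount n z t) : (0 : ℝ) ≤ _).eq_or_lt with h | h
  · rw [← h]; positivity
  · rw [← log_le_iff_le_exp h, ← div_le_iff₀ ht]
    exact hlub.1 ⟨t, ht, rfl⟩

theorem one_le_Zfun (hn : 0 < n) (β : ℝ) : 1 ≤ Zfun n z β := by
  obtain ⟨j, hj⟩ := exists_gap_eq_zero z hn
  calc (1 : ℝ) = exp (-(β * gap n z j)) := by rw [hj, mul_zero, neg_zero, exp_zero]
    _ ≤ Zfun n z β := Finset.single_le_sum (f := fun i => exp (-(β * gap n z i)))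
        (fun i _ => (exp_pos _).le) (Finset.mem_univ j)

theorem Zfun_le {Λ β : ℝ} (hlub : IsLUB (lamSet n z) Λ) (hβ : 0 < β) (hΛβ : Λ < β) :
    Zfun n z β ≤ β / (β - Λ) :=
  sum_exp_neg_le_of_card_le_exp (gap_nonneg z)
    (fun t ht => Ncount_eq_card z t ▸ Ncount_le_exp z hlub ht) hβ hΛβ

theorem softmaxP_eq (β : ℝ) (j : Fin n) :
    softmaxP n z β j = exp (-(β * gap n z j)) / Zfun n z β := by
  have hshift : ∀ i, exp (-(β * gap n z i)) = exp (-(β * zmax n z)) * exp (β * z i) := by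
    intro i; rw [← exp_add, gap]; ring_nf
  simp only [softmaxP, Zfun, hshift, ← Finset.mul_sum]
  rw [mul_div_mul_left _ _ (exp_ne_zero _)]

theorem entropyH_eq (hn : 0 < n) (β : ℝ) :
    entropyH n z β = ∑ j, softmaxP n z β j * (β * gap n z j) + log (Zfun n z β) := by
  have hZ : 0 < Zfun n z β := zero_lt_one.trans_le (one_le_Zfun z hn β)
  have hsum : ∑ j, softmaxP n z β j = 1 := by
    simp only [softmaxP_eq, ← Finset.sum_div]
    exact div_self hZ.ne'
  have hlog : ∀ j, log (softmaxP n z β j) = -(β * gap n z j) - log (Zfun n z β) := by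
    intro j
    rw [softmaxP_eq, log_div (exp_ne_zero _) hZ.ne', log_exp]
  simp only [entropyH, hlog, mul_sub, mul_neg, Finset.sum_sub_distrib, Finset.sum_neg_distrib,
    ← Finset.sum_mul, hsum, one_mul]
  ring

theorem entropyH_le (hn : 0 < n) (β : ℝ) :
    entropyH n z β ≤ 2 * (Zfun n z (β / 2) - Zfun n z β) / Zfun n z β + log (Zfun n z β) := by
  have hZ : 0 < Zfun n z β := zero_lt_one.trans_le (one_le_Zfun z hn β)
  rw [entropyH_eq z hn, add_le_add_iff_right]
  calc ∑ j, softmaxP n z β j * (β * gap n z j)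
      = (∑ j, β * gap n z j * exp (-(β * gap n z j))) / Zfun n z β := by
        simp only [softmaxP_eq, Finset.sum_div]
        congr! 1 with j; ring
    _ ≤ (∑ j, 2 * (exp (-(β / 2 * gap n z j)) - exp (-(β * gap n z j)))) / Zfun n z β := by
        refine div_le_div_of_nonneg_right (Finset.sum_le_sum fun j _ => ?_) hZ.le
        rw [show β / 2 * gap n z j = β * gap n z j / 2 by ring]
        exact mul_exp_neg_le _
    _ = 2 * (Zfun n z (β / 2) - Zfun n z β) / Zfun n z β := by
        rw [← Finset.mul_sum, Finset.sum_sub_distrib, Zfun, Zfun]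

theorem entropyH_nonneg (β : ℝ) : 0 ≤ entropyH n z β := by
  have hle : ∀ j, softmaxP n z β j ≤ 1 := fun j =>
    div_le_one_of_le₀ (Finset.single_le_sum (f := fun i => exp (β * z i))
      (fun i _ => (exp_pos _).le) (Finset.mem_univ j)) (by positivity)
  rw [entropyH, neg_nonneg]
  exact Finset.sum_nonpos fun j _ => mul_log_nonpos (by rw [softmaxP]; positivity) (hle j)

end Softmax

theorem tendsto_Zfun_one {z : (n : ℕ) → Fin n → ℝ} {Λ β : ℕ → ℝ} (hβ : ∀ n, 0 < β n)
    (hΛ : ∀ᶠ n in atTop, IsLUB (lamSet n (z n)) (Λ n))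
    (hsup : Tendsto (fun n => β n / Λ n) atTop atTop) :
    Tendsto (fun n => Zfun n (z n) (β n)) atTop (𝓝 1) := by
  have hupper : Tendsto (fun n => (1 - (β n / Λ n)⁻¹)⁻¹) atTop (𝓝 1) := by
    simpa using ((tendsto_inv_atTop_zero.comp hsup).const_sub 1).inv₀ (by norm_num)
  refine tendsto_of_tendsto_of_tendsto_of_le_of_le' tendsto_const_nhds hupper ?_ ?_
  · filter_upwards [eventually_gt_atTop 0] with n hn using one_le_Zfun (z n) hn (β n)
  · filter_upwards [hΛ, hsup.eventually_gt_atTop 1] with n hlub hq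
    have hΛpos : 0 < Λ n := by
      by_contra! h
      linarith [div_nonpos_of_nonneg_of_nonpos (hβ n).le h]
    calc Zfun n (z n) (β n) ≤ β n / (β n - Λ n) :=
          Zfun_le (z n) hlub (hβ n) ((one_lt_div hΛpos).1 hq)
      _ = (1 - (β n / Λ n)⁻¹)⁻¹ := by
          rw [inv_div, ← div_self (hβ n).ne', div_sub_div_same, inv_div]

theorem stmt5 (z : (n : ℕ) → Fin n → ℝ) (Λ β : ℕ → ℝ)
    (hβ : ∀ n, 0 < β n)
    (hΛ : ∀ᶠ n in atTop, IsLUB (lamSet n (z n)) (Λ n))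
    (hsup : Tendsto (fun n => β n / Λ n) atTop atTop) :
    Tendsto (fun n => Zfun n (z n) (β n)) atTop (nhds 1) ∧
      Tendsto (fun n => entropyH n (z n) (β n)) atTop (nhds 0) := by
  have hZ := tendsto_Zfun_one hβ hΛ hsup
  have hZhalf : Tendsto (fun n => Zfun n (z n) (β n / 2)) atTop (𝓝 1) :=
    tendsto_Zfun_one (fun n => half_pos (hβ n)) hΛ
      (by simpa only [div_right_comm] using hsup.atTop_div_const two_pos)
  have hupper : Tendsto (fun n => 2 * (Zfun n (z n) (β n / 2) - Zfun n (z n) (β n)) /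
      Zfun n (z n) (β n) + log (Zfun n (z n) (β n))) atTop (𝓝 0) := by
    simpa using (((hZhalf.sub hZ).const_mul 2).div hZ one_ne_zero).add (hZ.log one_ne_zero)
  refine ⟨hZ, tendsto_of_tendsto_of_tendsto_of_le_of_le' tendsto_const_nhds hupper
    (Eventually.of_forall fun n => entropyH_nonneg (z n) (β n)) ?_⟩
  filter_upwards [eventually_gt_atTop 0] with n hn using entropyH_le (z n) hn (β n)
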